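/- For any vector x in GF(2)^n with r(x) runs, the number of vectors obtainable from x by a t-grain-error equals the sum over j from 0 to min(t, r(x)-1) of binomial(r(x)-1, j). -/

import Mathlib

/-!
A grain error may flip a symbol only at a position where a new run starts, and such positions
are the `r(x) - 1` run boundaries of `x`. Over `GF(2)` an error vector is the same thing as its
support, so the grain errors of weight at most `t` are the subsets of the run boundaries of size
at most `t`, and adding them to `x` is injective.
-/

/-- `e` is a `t`-grain-error for `x`: weight at most `t`, `e₁ = 0`, and an error at
position `i` (2 ≤ i ≤ n) requires `x_i ≠ x_{i-1}`. (0-indexed here.) -/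
def grainError {n : ℕ} (t : ℕ) (x e : Fin n → ZMod 2) : Prop :=
  (Finset.univ.filter fun i => e i ≠ 0).card ≤ t ∧
  (∀ i : Fin n, (i : ℕ) = 0 → e i = 0) ∧
  (∀ i : Fin n, 0 < (i : ℕ) → e i ≠ 0 →
    x i ≠ x ⟨(i : ℕ) - 1, lt_of_le_of_lt (Nat.sub_le _ _) i.isLt⟩)

/-- The grain error-ball `B_{t,G}(x)`. -/
def grainBall {n : ℕ} (t : ℕ) (x : Fin n → ZMod 2) : Set (Fin n → ZMod 2) :=
  {y | ∃ e, grainError t x e ∧ y = x + e}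

/-- The number of runs of a binary vector. -/
def runs {n : ℕ} (x : Fin n → ZMod 2) : ℕ :=
  (if n = 0 then 0 else 1) +
  (Finset.univ.filter fun i : Fin n =>
    0 < (i : ℕ) ∧ x i ≠ x ⟨(i : ℕ) - 1, lt_of_le_of_lt (Nat.sub_le _ _) i.isLt⟩).card

open Finset

/-- The starts of all runs of `x` but the first. -/
def runBoundaries {n : ℕ} (x : Fin n → ZMod 2) : Finset (Fin n) :=
  univ.filter fun i : Fin n =>
    0 < (i : ℕ) ∧ x i ≠ x ⟨(i : ℕ) - 1, lt_of_le_of_lt (Nat.sub_le _ _) i.isLt⟩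

lemma runs_sub_one_eq_card_runBoundaries {n : ℕ} (x : Fin n → ZMod 2) :
    runs x - 1 = #(runBoundaries x) := by
  change (if n = 0 then 0 else 1) + #(runBoundaries x) - 1 = #(runBoundaries x)
  split_ifs with hn
  · subst hn
    simp [runBoundaries]
  · omega

def funZModTwoEquivFinset (ι : Type*) [Fintype ι] [DecidableEq ι] :
    (ι → ZMod 2) ≃ Finset ι where
  toFun e := {i | e i ≠ 0}
  invFun T i := if i ∈ T then 1 else 0
  left_inv e := funext fun i => by
    simp only [mem_filter, mem_univ, true_and]
    generalize e i = a
    revert a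
    decide
  right_inv T := by ext; simp

lemma grainError_iff {n t : ℕ} {x e : Fin n → ZMod 2} :
    grainError t x e ↔
      funZModTwoEquivFinset (Fin n) e ∈ {T ∈ (runBoundaries x).powerset | #T ≤ t} := by
  simp only [grainError, funZModTwoEquivFinset, Equiv.coe_fn_mk, runBoundaries, mem_filter,
    mem_powerset, subset_iff, mem_univ, true_and]
  constructor
  · rintro ⟨hcard, hfirst, hboundary⟩
    refine ⟨fun i hi => ?_, hcard⟩
    have hpos : 0 < (i : ℕ) := Nat.pos_of_ne_zero fun h => hi (hfirst i h)
    exact ⟨hpos, hboundary i hpos hi⟩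
  · rintro ⟨hsupp, hcard⟩
    exact ⟨hcard, fun i hi => by_contra fun he => (hsupp he).1.ne' hi,
      fun i _ he => (hsupp he).2⟩

lemma card_filter_powerset_card_le {α : Type*} (s : Finset α) (t : ℕ) :
    #{T ∈ s.powerset | #T ≤ t} = ∑ j ∈ range (min t #s + 1), (#s).choose j := by
  have hmaps : Set.MapsTo card (s.powerset.filter (#· ≤ t) : Set (Finset α))
      (range (min t #s + 1) : Set ℕ) := by
    intro T hT
    rw [mem_coe, mem_filter, mem_powerset] at hT
    rw [mem_coe, mem_range]
    have := card_le_card hT.1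
    omega
  rw [card_eq_sum_card_fiberwise hmaps]
  refine sum_congr rfl fun j hj => ?_
  have hjt : j ≤ t := by simp only [mem_range] at hj; omega
  rw [← card_powersetCard, powersetCard_eq_filter, filter_filter]
  congr 1
  exact filter_congr fun T _ => ⟨And.right, fun h => ⟨h ▸ hjt, h⟩⟩

theorem stmt0 {n t : ℕ} (x : Fin n → ZMod 2) :
    Nat.card (grainBall t x) =
      ∑ j ∈ Finset.range (min t (runs x - 1) + 1), Nat.choose (runs x - 1) j := by
  set E := funZModTwoEquivFinset (Fin n)
  set P : Finset (Finset (Fin n)) := {T ∈ (runBoundaries x).powerset | #T ≤ t}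
  have hball : grainBall t x = (x + ·) '' (E ⁻¹' P) := by
    ext y
    simp only [grainBall, Set.mem_image, Set.mem_preimage, mem_coe]
    exact exists_congr fun e => and_congr grainError_iff eq_comm
  rw [hball, Nat.card_image_of_injective (add_right_injective x),
    Nat.card_preimage_of_injective E.injective (by simp), Nat.card_coe_set_eq,
    Set.ncard_coe_finset, card_filter_powerset_card_le, runs_sub_one_eq_card_runBoundaries]
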